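/- Let k, λ ∈ ℕ with λ ≥ 1, let f : ℝ² → ℝ be smooth with supp f ⊂ [−k, k]², and let g : ℝ² → ℝ be smooth, ℤ²-periodic, with mean zero over the unit cell [0,1]². Then |∫_{[−k,k]²} f(x) g(λx) dx| ≤ 4√2 · k² · ‖f‖_{C¹(ℝ²)} · ‖g‖_{L¹([0,1]²)} / λ. -/

import Mathlib

open MeasureTheory intervalIntegral

lemma box_int (h : ℝ × ℝ → ℝ) (hc : Continuous h) (a b : ℝ) (hab : a ≤ b) :
    ∫ x in Set.Icc ((a, a) : ℝ × ℝ) (b, b), h x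
      = ∫ x in a..b, ∫ y in a..b, h (x, y) := by
  rw [Set.Icc_prod_eq, MeasureTheory.Measure.volume_eq_prod,
    setIntegral_prod _ (by
      rw [← MeasureTheory.Measure.volume_eq_prod]
      exact hc.continuousOn.integrableOn_compact (isCompact_Icc.prod isCompact_Icc))]
  rw [MeasureTheory.integral_Icc_eq_integral_Ioc, ← intervalIntegral.integral_of_le hab]
  refine intervalIntegral.integral_congr fun x _ => ?_
  rw [MeasureTheory.integral_Icc_eq_integral_Ioc, ← intervalIntegral.integral_of_le hab]

lemma per1 {F : ℝ → ℝ} (hF : ∀ x, F (x + 1) = F x) (q : ℤ) :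
    ∫ v in (q : ℝ)..(q : ℝ) + 1, F v = ∫ v in (0:ℝ)..1, F v := by
  have hp : Function.Periodic F 1 := hF
  simpa using hp.intervalIntegral_add_eq (q : ℝ) 0

lemma cell_int (G : ℝ × ℝ → ℝ)
    (hper : ∀ (m₁ m₂ : ℤ) (x : ℝ × ℝ), G (x.1 + m₁, x.2 + m₂) = G x)
    (lam : ℕ) (p q : ℤ) :
    ∫ x in ((p : ℝ)/lam)..((p + 1 : ℝ)/lam), ∫ y in ((q : ℝ)/lam)..((q + 1 : ℝ)/lam),
        G ((lam : ℝ) * x, (lam : ℝ) * y)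
      = ((lam : ℝ)⁻¹)^2 * ∫ u in (0:ℝ)..1, ∫ v in (0:ℝ)..1, G (u, v) := by
  by_cases hL : (lam : ℝ) = 0
  · simp [hL]
  have inner : ∀ x : ℝ, ∫ y in ((q : ℝ)/lam)..((q + 1 : ℝ)/lam), G ((lam : ℝ) * x, (lam : ℝ) * y)
      = (lam : ℝ)⁻¹ * ∫ v in (0:ℝ)..1, G ((lam : ℝ) * x, v) := by
    intro x
    rw [intervalIntegral.integral_comp_mul_left (fun v => G ((lam : ℝ) * x, v)) hL]
    rw [mul_div_cancel₀ _ hL, mul_div_cancel₀ _ hL, smul_eq_mul]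
    congr 1
    have := per1 (F := fun v => G ((lam : ℝ) * x, v)) (fun v => by
      simpa using hper 0 1 ((lam : ℝ) * x, v)) q
    simpa using this
  simp only [inner]
  rw [intervalIntegral.integral_const_mul]
  rw [intervalIntegral.integral_comp_mul_left
    (fun u => ∫ v in (0:ℝ)..1, G (u, v)) hL]
  rw [mul_div_cancel₀ _ hL, mul_div_cancel₀ _ hL, smul_eq_mul]
  have := per1 (F := fun u => ∫ v in (0:ℝ)..1, G (u, v)) (fun u => by
    refine intervalIntegral.integral_congr fun v _ => ?_
    simpa using hper 1 0 (u, v)) p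
  rw [this]
  ring

lemma parcont (F : ℝ × ℝ → ℝ) (hF : Continuous F) (s t : ℝ) :
    Continuous fun x : ℝ => ∫ y in s..t, F (x, y) :=
  intervalIntegral.continuous_parametric_intervalIntegral_of_continuous'
    (f := fun x y => F (x, y)) (hF.comp (continuous_fst.prodMk continuous_snd)) s t

theorem fast_oscillation_estimate (k lam : ℕ) (hlam : 1 ≤ lam)
    (f : ℝ × ℝ → ℝ) (hf : ContDiff ℝ (⊤ : ℕ∞) f)
    (hsupp : tsupport f ⊆ Set.Icc ((-(k:ℝ), -(k:ℝ)) : ℝ × ℝ) ((k:ℝ), (k:ℝ)))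
    (g : ℝ × ℝ → ℝ) (hg : ContDiff ℝ (⊤ : ℕ∞) g)
    (hper : ∀ (m₁ m₂ : ℤ) (x : ℝ × ℝ), g (x.1 + m₁, x.2 + m₂) = g x)
    (hmean : ∫ x in Set.Icc (((0:ℝ), (0:ℝ)) : ℝ × ℝ) ((1:ℝ), (1:ℝ)), g x = 0) :
    |∫ x in Set.Icc ((-(k:ℝ), -(k:ℝ)) : ℝ × ℝ) ((k:ℝ), (k:ℝ)), f x * g ((lam:ℝ) • x)|
      ≤ 4 * Real.sqrt 2 * (k:ℝ)^2 *
          ((⨆ x : ℝ × ℝ, |f x|) + ⨆ x : ℝ × ℝ, ‖fderiv ℝ f x‖) *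
          (∫ x in Set.Icc (((0:ℝ), (0:ℝ)) : ℝ × ℝ) ((1:ℝ), (1:ℝ)), |g x|) / lam := by
  have hL0 : (0:ℝ) < lam := by exact_mod_cast hlam
  have hLne : (lam:ℝ) ≠ 0 := ne_of_gt hL0
  set C := ⨆ x : ℝ × ℝ, ‖fderiv ℝ f x‖ with hCdef
  set A := ⨆ x : ℝ × ℝ, |f x| with hAdef
  set L := ∫ x in Set.Icc (((0:ℝ), (0:ℝ)) : ℝ × ℝ) ((1:ℝ), (1:ℝ)), |g x| with hLdef
  have hgc : Continuous g := hg.continuous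
  have hfc : Continuous f := hf.continuous
  have hgabs : Continuous (fun x : ℝ × ℝ => |g x|) := hgc.abs
  set h : ℝ × ℝ → ℝ := fun x => f x * g ((lam:ℝ) • x) with hhdef
  have hhc : Continuous h := hfc.mul (hgc.comp (continuous_const_smul (lam:ℝ)))
  -- bounds on f
  have hK : HasCompactSupport f :=
    IsCompact.of_isClosed_subset isCompact_Icc (isClosed_tsupport f) hsupp
  have hdc : Continuous (fderiv ℝ f) := hf.continuous_fderiv (by simp)
  obtain ⟨C₀, hC₀⟩ := hdc.bounded_above_of_compact_support (hK.fderiv ℝ)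
  have hbdd : BddAbove (Set.range fun x : ℝ × ℝ => ‖fderiv ℝ f x‖) :=
    ⟨C₀, by rintro _ ⟨x, rfl⟩; exact hC₀ x⟩
  have hCle : ∀ x, ‖fderiv ℝ f x‖ ≤ C := fun x => le_ciSup hbdd x
  have hC0 : (0:ℝ) ≤ C := le_trans (norm_nonneg _) (hCle (0, 0))
  have hA0 : (0:ℝ) ≤ A := Real.iSup_nonneg fun x => abs_nonneg _
  have hL0' : (0:ℝ) ≤ L := setIntegral_nonneg measurableSet_Icc fun x _ => abs_nonneg _
  have hlip : ∀ x y : ℝ × ℝ, |f x - f y| ≤ C * ‖x - y‖ := by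
    intro x y
    have := convex_univ.norm_image_sub_le_of_norm_fderiv_le
      (f := f) (fun z _ => hf.differentiable (by simp) z) (fun z _ => hCle z)
      (Set.mem_univ y) (Set.mem_univ x)
    simpa [Real.norm_eq_abs] using this
  -- iterated forms of the unit-square integrals
  have hmean' : ∫ u in (0:ℝ)..1, ∫ v in (0:ℝ)..1, g (u, v) = 0 := by
    rw [← box_int g hgc 0 1 zero_le_one]; exact hmean
  have hL1 : ∫ u in (0:ℝ)..1, ∫ v in (0:ℝ)..1, |g (u, v)| = L := by
    rw [hLdef, box_int (fun x => |g x|) hgabs 0 1 zero_le_one]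
  -- the key cell estimate
  have key : ∀ p q : ℤ,
      |∫ x in ((p:ℝ)/lam)..((p + 1 : ℝ)/lam), ∫ y in ((q:ℝ)/lam)..((q + 1 : ℝ)/lam), h (x, y)|
        ≤ Real.sqrt 2 * C * L * ((lam:ℝ)⁻¹)^3 := by
    intro p q
    have hinv : (0:ℝ) ≤ (lam:ℝ)⁻¹ := by positivity
    have hab₁ : (p:ℝ)/lam ≤ ((p:ℝ)+1)/lam := by
      apply div_le_div_of_nonneg_right ?_ hL0.le
      linarith
    have hab₂ : (q:ℝ)/lam ≤ ((q:ℝ)+1)/lam := by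
      apply div_le_div_of_nonneg_right ?_ hL0.le
      linarith
    have hglc : Continuous fun z : ℝ × ℝ => g ((lam:ℝ)*z.1, (lam:ℝ)*z.2) :=
      hgc.comp ((continuous_const.mul continuous_fst).prodMk
        (continuous_const.mul continuous_snd))
    have hdiffc : Continuous fun z : ℝ × ℝ =>
        (f z - f ((p:ℝ)/lam, (q:ℝ)/lam)) * g ((lam:ℝ)*z.1, (lam:ℝ)*z.2) :=
      (hfc.sub continuous_const).mul hglc
    have hzero : (∫ x in (p:ℝ)/lam..((p:ℝ)+1)/lam, ∫ y in (q:ℝ)/lam..((q:ℝ)+1)/lam,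
        g ((lam:ℝ)*x, (lam:ℝ)*y)) = 0 := by
      rw [cell_int g hper lam p q, hmean', mul_zero]
    have habs2 : (∫ x in (p:ℝ)/lam..((p:ℝ)+1)/lam, ∫ y in (q:ℝ)/lam..((q:ℝ)+1)/lam,
        |g ((lam:ℝ)*x, (lam:ℝ)*y)|) = ((lam:ℝ)⁻¹)^2 * L := by
      rw [cell_int (fun z => |g z|) (fun m₁ m₂ x => congrArg abs (hper m₁ m₂ x)) lam p q, hL1]
    have e1 : ∀ x : ℝ, (∫ y in (q:ℝ)/lam..((q:ℝ)+1)/lam,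
          (f (x, y) - f ((p:ℝ)/lam, (q:ℝ)/lam)) * g ((lam:ℝ)*x, (lam:ℝ)*y))
        = (∫ y in (q:ℝ)/lam..((q:ℝ)+1)/lam, h (x, y))
          - f ((p:ℝ)/lam, (q:ℝ)/lam) * ∫ y in (q:ℝ)/lam..((q:ℝ)+1)/lam,
              g ((lam:ℝ)*x, (lam:ℝ)*y) := by
      intro x
      have i1 : IntervalIntegrable (fun y => h (x, y)) volume ((q:ℝ)/lam) (((q:ℝ)+1)/lam) :=
        (hhc.comp (continuous_const.prodMk continuous_id)).intervalIntegrable _ _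
      have i2 : IntervalIntegrable (fun y => f ((p:ℝ)/lam, (q:ℝ)/lam) * g ((lam:ℝ)*x, (lam:ℝ)*y))
          volume ((q:ℝ)/lam) (((q:ℝ)+1)/lam) :=
        (continuous_const.mul (hgc.comp (continuous_const.prodMk
          (continuous_const.mul continuous_id)))).intervalIntegrable _ _
      rw [← intervalIntegral.integral_const_mul, ← intervalIntegral.integral_sub i1 i2]
      refine intervalIntegral.integral_congr fun y _ => ?_
      have hsm : ((lam:ℝ)) • ((x, y) : ℝ × ℝ) = ((lam:ℝ)*x, (lam:ℝ)*y) := rfl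
      simp only [hhdef, hsm]
      ring
    have hsplit : (∫ x in (p:ℝ)/lam..((p:ℝ)+1)/lam, ∫ y in (q:ℝ)/lam..((q:ℝ)+1)/lam, h (x, y))
        = ∫ x in (p:ℝ)/lam..((p:ℝ)+1)/lam, ∫ y in (q:ℝ)/lam..((q:ℝ)+1)/lam,
            (f (x, y) - f ((p:ℝ)/lam, (q:ℝ)/lam)) * g ((lam:ℝ)*x, (lam:ℝ)*y) := by
      symm
      calc (∫ x in (p:ℝ)/lam..((p:ℝ)+1)/lam, ∫ y in (q:ℝ)/lam..((q:ℝ)+1)/lam,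
              (f (x, y) - f ((p:ℝ)/lam, (q:ℝ)/lam)) * g ((lam:ℝ)*x, (lam:ℝ)*y))
          = ∫ x in (p:ℝ)/lam..((p:ℝ)+1)/lam,
              ((∫ y in (q:ℝ)/lam..((q:ℝ)+1)/lam, h (x, y))
                - f ((p:ℝ)/lam, (q:ℝ)/lam) * ∫ y in (q:ℝ)/lam..((q:ℝ)+1)/lam,
                    g ((lam:ℝ)*x, (lam:ℝ)*y)) :=
            intervalIntegral.integral_congr fun x _ => e1 x
        _ = (∫ x in (p:ℝ)/lam..((p:ℝ)+1)/lam, ∫ y in (q:ℝ)/lam..((q:ℝ)+1)/lam, h (x, y))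
            - f ((p:ℝ)/lam, (q:ℝ)/lam) * ∫ x in (p:ℝ)/lam..((p:ℝ)+1)/lam,
                ∫ y in (q:ℝ)/lam..((q:ℝ)+1)/lam, g ((lam:ℝ)*x, (lam:ℝ)*y) := by
            have I1 : IntervalIntegrable (fun x => ∫ y in (q:ℝ)/lam..((q:ℝ)+1)/lam, h (x, y))
                volume ((p:ℝ)/lam) (((p:ℝ)+1)/lam) :=
              (parcont h hhc _ _).intervalIntegrable _ _
            have I2 : IntervalIntegrable (fun x => f ((p:ℝ)/lam, (q:ℝ)/lam) *
                ∫ y in (q:ℝ)/lam..((q:ℝ)+1)/lam, g ((lam:ℝ)*x, (lam:ℝ)*y))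
                volume ((p:ℝ)/lam) (((p:ℝ)+1)/lam) :=
              (continuous_const.mul (parcont _ hglc _ _)).intervalIntegrable _ _
            rw [intervalIntegral.integral_sub I1 I2, intervalIntegral.integral_const_mul]
        _ = ∫ x in (p:ℝ)/lam..((p:ℝ)+1)/lam, ∫ y in (q:ℝ)/lam..((q:ℝ)+1)/lam, h (x, y) := by
            rw [hzero, mul_zero, sub_zero]
    rw [hsplit]
    have hs2 : (1:ℝ) ≤ Real.sqrt 2 := by
      rw [show (1:ℝ) = Real.sqrt 1 from (Real.sqrt_one).symm]
      exact Real.sqrt_le_sqrt (by norm_num)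
    have hba₁ : ((p:ℝ)+1)/lam - (p:ℝ)/lam = (lam:ℝ)⁻¹ := by field_simp; ring
    have hba₂ : ((q:ℝ)+1)/lam - (q:ℝ)/lam = (lam:ℝ)⁻¹ := by field_simp; ring
    have hptb : ∀ x ∈ Set.Icc ((p:ℝ)/lam) (((p:ℝ)+1)/lam),
        ∀ y ∈ Set.Icc ((q:ℝ)/lam) (((q:ℝ)+1)/lam),
        |(f (x, y) - f ((p:ℝ)/lam, (q:ℝ)/lam)) * g ((lam:ℝ)*x, (lam:ℝ)*y)|
          ≤ (Real.sqrt 2 * C * (lam:ℝ)⁻¹) * |g ((lam:ℝ)*x, (lam:ℝ)*y)| := by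
      intro x hx y hy
      rw [abs_mul]
      apply mul_le_mul_of_nonneg_right _ (abs_nonneg _)
      refine le_trans (hlip _ _) ?_
      have hnorm : ‖((x, y) : ℝ × ℝ) - ((p:ℝ)/lam, (q:ℝ)/lam)‖ ≤ (lam:ℝ)⁻¹ := by
        rw [Prod.mk_sub_mk, Prod.norm_def]
        apply max_le
        · rw [Real.norm_eq_abs, abs_le]
          constructor
          · have := hx.1; linarith
          · have := hx.2; linarith
        · rw [Real.norm_eq_abs, abs_le]
          constructor
          · have := hy.1; linarith
          · have := hy.2; linarith
      have h1 : C * ‖((x, y) : ℝ × ℝ) - ((p:ℝ)/lam, (q:ℝ)/lam)‖ ≤ C * (lam:ℝ)⁻¹ :=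
        mul_le_mul_of_nonneg_left hnorm hC0
      nlinarith [mul_nonneg hC0 hinv]
    calc |∫ x in (p:ℝ)/lam..((p:ℝ)+1)/lam, ∫ y in (q:ℝ)/lam..((q:ℝ)+1)/lam,
            (f (x, y) - f ((p:ℝ)/lam, (q:ℝ)/lam)) * g ((lam:ℝ)*x, (lam:ℝ)*y)|
        ≤ ∫ x in (p:ℝ)/lam..((p:ℝ)+1)/lam, |∫ y in (q:ℝ)/lam..((q:ℝ)+1)/lam,
            (f (x, y) - f ((p:ℝ)/lam, (q:ℝ)/lam)) * g ((lam:ℝ)*x, (lam:ℝ)*y)| :=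
          intervalIntegral.abs_integral_le_integral_abs hab₁
      _ ≤ ∫ x in (p:ℝ)/lam..((p:ℝ)+1)/lam, ∫ y in (q:ℝ)/lam..((q:ℝ)+1)/lam,
            (Real.sqrt 2 * C * (lam:ℝ)⁻¹) * |g ((lam:ℝ)*x, (lam:ℝ)*y)| := by
          have I3 : IntervalIntegrable (fun x => |∫ y in (q:ℝ)/lam..((q:ℝ)+1)/lam,
              (f (x, y) - f ((p:ℝ)/lam, (q:ℝ)/lam)) * g ((lam:ℝ)*x, (lam:ℝ)*y)|)
              volume ((p:ℝ)/lam) (((p:ℝ)+1)/lam) :=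
            (parcont _ hdiffc _ _).abs.intervalIntegrable _ _
          have I4 : IntervalIntegrable (fun x => ∫ y in (q:ℝ)/lam..((q:ℝ)+1)/lam,
              (Real.sqrt 2 * C * (lam:ℝ)⁻¹) * |g ((lam:ℝ)*x, (lam:ℝ)*y)|)
              volume ((p:ℝ)/lam) (((p:ℝ)+1)/lam) :=
            (parcont _ (continuous_const.mul hglc.abs) _ _).intervalIntegrable _ _
          apply intervalIntegral.integral_mono_on hab₁ I3 I4
          intro x hx
          refine le_trans (intervalIntegral.abs_integral_le_integral_abs hab₂) ?_
          have i3 : IntervalIntegrable (fun y => |(f (x, y) - f ((p:ℝ)/lam, (q:ℝ)/lam)) *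
              g ((lam:ℝ)*x, (lam:ℝ)*y)|) volume ((q:ℝ)/lam) (((q:ℝ)+1)/lam) :=
            ((hdiffc.comp (continuous_const.prodMk continuous_id)).abs).intervalIntegrable _ _
          have i4 : IntervalIntegrable (fun y => (Real.sqrt 2 * C * (lam:ℝ)⁻¹) *
              |g ((lam:ℝ)*x, (lam:ℝ)*y)|) volume ((q:ℝ)/lam) (((q:ℝ)+1)/lam) :=
            (continuous_const.mul ((hglc.comp (continuous_const.prodMk
              continuous_id)).abs)).intervalIntegrable _ _
          apply intervalIntegral.integral_mono_on hab₂ i3 i4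
          intro y hy
          exact hptb x hx y hy
      _ = (Real.sqrt 2 * C * (lam:ℝ)⁻¹) * (((lam:ℝ)⁻¹)^2 * L) := by
          simp only [intervalIntegral.integral_const_mul]
          rw [habs2]
      _ = Real.sqrt 2 * C * L * ((lam:ℝ)⁻¹)^3 := by ring

  -- grid setup
  set N : ℕ := 2 * k * lam with hNdef
  set a : ℕ → ℝ := fun i => -(k:ℝ) + i / lam with hadef
  have ha0 : a 0 = -(k:ℝ) := by simp [hadef]
  have haN : a N = (k:ℝ) := by
    simp only [hadef, hNdef]
    push_cast
    field_simp
    ring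
  have hai : ∀ i : ℕ, a i = (((i : ℤ) - (k * lam : ℕ) : ℤ) : ℝ) / lam := by
    intro i
    simp only [hadef]
    push_cast
    field_simp
    ring
  have hai' : ∀ i : ℕ, a (i + 1) = ((((i : ℤ) - (k * lam : ℕ) : ℤ) : ℝ) + 1) / lam := by
    intro i
    rw [hai (i + 1)]
    push_cast
    ring_nf
  -- continuity of parametric integrals
  have hpar : ∀ s t : ℝ, Continuous fun x => ∫ y in s..t, h (x, y) := by
    intro s t
    apply intervalIntegral.continuous_parametric_intervalIntegral_of_continuous'
    exact hhc.comp (continuous_fst.prodMk continuous_snd)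
  have hmk : -(k:ℝ) ≤ (k:ℝ) := by
    have : (0:ℝ) ≤ k := Nat.cast_nonneg k
    linarith
  -- decompose the integral
  have hI : ∫ x in Set.Icc ((-(k:ℝ), -(k:ℝ)) : ℝ × ℝ) ((k:ℝ), (k:ℝ)), f x * g ((lam:ℝ) • x)
      = ∑ i ∈ Finset.range N, ∑ j ∈ Finset.range N,
          ∫ x in a i..a (i + 1), ∫ y in a j..a (j + 1), h (x, y) := by
    have h1 : ∫ x in Set.Icc ((-(k:ℝ), -(k:ℝ)) : ℝ × ℝ) ((k:ℝ), (k:ℝ)), f x * g ((lam:ℝ) • x)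
        = ∫ x in -(k:ℝ)..(k:ℝ), ∫ y in -(k:ℝ)..(k:ℝ), h (x, y) :=
      box_int h hhc (-(k:ℝ)) (k:ℝ) hmk
    rw [h1]
    have h2 : ∫ x in -(k:ℝ)..(k:ℝ), ∫ y in -(k:ℝ)..(k:ℝ), h (x, y)
        = ∑ i ∈ Finset.range N, ∫ x in a i..a (i + 1), ∫ y in -(k:ℝ)..(k:ℝ), h (x, y) := by
      have := intervalIntegral.sum_integral_adjacent_intervals (a := a) (n := N)
        (f := fun x => ∫ y in -(k:ℝ)..(k:ℝ), h (x, y)) (μ := volume)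
        (fun i _ => (hpar _ _).intervalIntegrable _ _)
      rw [ha0, haN] at this
      exact this.symm
    rw [h2]
    refine Finset.sum_congr rfl fun i _ => ?_
    have h3 : ∀ x : ℝ, ∫ y in -(k:ℝ)..(k:ℝ), h (x, y)
        = ∑ j ∈ Finset.range N, ∫ y in a j..a (j + 1), h (x, y) := by
      intro x
      have := intervalIntegral.sum_integral_adjacent_intervals (a := a) (n := N)
        (f := fun y => h (x, y)) (μ := volume)
        (fun j _ => ((hhc.comp (Continuous.prodMk continuous_const continuous_id)).intervalIntegrable _ _))
      rw [ha0, haN] at this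
      exact this.symm
    rw [intervalIntegral.integral_congr fun x _ => h3 x]
    exact intervalIntegral.integral_finset_sum
      (fun j _ => (hpar _ _).intervalIntegrable _ _)
  rw [hI]
  -- bound the sum
  have hB : ∀ i ∈ Finset.range N, ∀ j ∈ Finset.range N,
      |∫ x in a i..a (i + 1), ∫ y in a j..a (j + 1), h (x, y)|
        ≤ Real.sqrt 2 * C * L * ((lam:ℝ)⁻¹)^3 := by
    intro i _ j _
    have := key ((i : ℤ) - (k * lam : ℕ)) ((j : ℤ) - (k * lam : ℕ))
    rwa [← hai i, ← hai' i, ← hai j, ← hai' j] at this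
  calc |∑ i ∈ Finset.range N, ∑ j ∈ Finset.range N,
          ∫ x in a i..a (i + 1), ∫ y in a j..a (j + 1), h (x, y)|
      ≤ ∑ i ∈ Finset.range N, ∑ j ∈ Finset.range N,
          |∫ x in a i..a (i + 1), ∫ y in a j..a (j + 1), h (x, y)| := by
        refine (Finset.abs_sum_le_sum_abs _ _).trans ?_
        exact Finset.sum_le_sum fun i _ => Finset.abs_sum_le_sum_abs _ _
    _ ≤ ∑ i ∈ Finset.range N, ∑ j ∈ Finset.range N,
          (Real.sqrt 2 * C * L * ((lam:ℝ)⁻¹)^3) := by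
        exact Finset.sum_le_sum fun i hi => Finset.sum_le_sum fun j hj => hB i hi j hj
    _ = (N:ℝ)^2 * (Real.sqrt 2 * C * L * ((lam:ℝ)⁻¹)^3) := by
        simp [Finset.sum_const, Finset.card_range]
        ring
    _ = 4 * Real.sqrt 2 * (k:ℝ)^2 * C * L / lam := by
        have hN : (N:ℝ) = 2 * k * lam := by rw [hNdef]; push_cast; ring
        rw [hN]
        field_simp
        ring
    _ ≤ 4 * Real.sqrt 2 * (k:ℝ)^2 * (A + C) * L / lam := by
        gcongr
        · linarith
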